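/- Let L/K be a finite field extension in characteristic p > 0. Then D(L/K) = End_{L^{sep}}(L), where L^{sep} is the separable closure of K in L. In particular D(L/K) is a central simple L^{sep}-algebra of degree [L : L^{sep}]. -/

import Mathlib

/-- The filtration of Grothendieck differential operators on the `K`-algebra `L`:
`D_0` is the set of multiplication operators and
`D_{i+1} = {δ : [δ, l·] ∈ D_i for all l ∈ L}`. -/
def diffOpFil (K L : Type*) [Field K] [Field L] [Algebra K L] :
    ℕ → Set (Module.End K L)
  | 0 => Set.range ⇑(Algebra.lmul K L)
  | n + 1 =>
      {δ | ∀ l : L, δ * Algebra.lmul K L l - Algebra.lmul K L l * δ ∈ diffOpFil K L n}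

/-- The algebra `D(L/K)` of Grothendieck differential operators on `L` over `K`,
as a subset of `End_K(L)`: the union of the filtration `diffOpFil`. -/
def diffOps (K L : Type*) [Field K] [Field L] [Algebra K L] : Set (Module.End K L) :=
  ⋃ n, diffOpFil K L n

/-!
A differential operator commutes with multiplication by every separable `s`: if `c = [δ, s]`
commutes with `s`, then `0 = [δ, f(s)] = f'(s) c` for the minimal polynomial `f` of `s`, and
`f'(s)` is a unit. Conversely, let `δ` commute with `L^{sep}`. On the centralizer `C` of
`L^{sep}` the operators `ad_l = [-, l]` commute pairwise and are nilpotent, since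
`ad_l ^ (p ^ m) = ad_{l ^ (p ^ m)}` and `l ^ (p ^ m) ∈ L^{sep}` for some `m`. In the commutative
algebra they generate, the ideal spanned by `ad_{b_i}` for a `K`-basis `b` of `L` is a finitely
generated nil ideal, hence nilpotent, so all long enough iterated commutators of `δ` vanish.
-/

open Polynomial

/-- `adRight K A a x = x * a - a * x`, the sign convention of `diffOpFil`; this is
`-LieAlgebra.ad K A a`. -/
noncomputable def adRight (K A : Type*) [CommRing K] [Ring A] [Algebra K A] :
    A →ₗ[K] Module.End K A :=
  (LinearMap.mul K A).flip - LinearMap.mul K A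

section adRight

variable {K A : Type*} [CommRing K] [Ring A] [Algebra K A]

@[simp] theorem adRight_apply (a x : A) : adRight K A a x = x * a - a * x := rfl

theorem adRight_eq_mulRight_sub_mulLeft (a : A) :
    adRight K A a = LinearMap.mulRight K a - LinearMap.mulLeft K a := rfl

theorem commute_adRight_adRight {a b : A} (h : Commute a b) :
    Commute (adRight K A a) (adRight K A b) := by
  have hRR : Commute (LinearMap.mulRight K a) (LinearMap.mulRight K b) := by
    ext x; simp [mul_assoc, h.eq]
  have hLL : Commute (LinearMap.mulLeft K a) (LinearMap.mulLeft K b) := by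
    ext x; simp [← mul_assoc, h.eq]
  rw [adRight_eq_mulRight_sub_mulLeft, adRight_eq_mulRight_sub_mulLeft]
  exact (hRR.sub_right (LinearMap.commute_mulLeft_right b a).symm).sub_left
    ((LinearMap.commute_mulLeft_right a b).sub_right hLL)

theorem adRight_eq_zero {a : A} (h : ∀ x, Commute a x) : adRight K A a = 0 := by
  ext x
  simp [(h x).eq]

theorem mul_aeval_sub_aeval_mul {δ T c : A} (hc : δ * T - T * δ = c) (hTc : Commute T c) (f : K[X]) :
    δ * aeval T f - aeval T f * δ = aeval T (derivative f) * c := by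
  induction f using Polynomial.induction_on with
  | C a => simp [Algebra.commutes]
  | add f g hf hg =>
    simp only [map_add, add_mul, mul_add, ← hf, ← hg]
    abel
  | monomial n a ih =>
    rw [pow_succ, ← mul_assoc]
    generalize C a * X ^ n = g at ih ⊢
    simp only [derivative_mul, derivative_X, mul_one, map_mul, map_add, aeval_X]
    calc δ * (aeval T g * T) - aeval T g * T * δ
        = (δ * aeval T g - aeval T g * δ) * T + aeval T g * (δ * T - T * δ) := by noncomm_ring
      _ = aeval T (derivative g) * c * T + aeval T g * c := by rw [ih, hc]
      _ = (aeval T (derivative g) * T + aeval T g) * c := by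
        rw [mul_assoc, ← hTc.eq, ← mul_assoc, add_mul]

end adRight

theorem adRight_pow_expChar_pow {K A : Type*} [Field K] [Ring A] [Algebra K A] [Nontrivial A]
    (p : ℕ) [ExpChar K p] (a : A) (n : ℕ) :
    adRight K A a ^ p ^ n = adRight K A (a ^ p ^ n) := by
  have := expChar_of_injective_algebraMap (algebraMap K (Module.End K A)).injective p
  rw [adRight_eq_mulRight_sub_mulLeft, adRight_eq_mulRight_sub_mulLeft,
    sub_pow_expChar_pow_of_commute p n (LinearMap.commute_mulLeft_right a a).symm,
    LinearMap.pow_mulRight, LinearMap.pow_mulLeft]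

theorem Ideal.list_prod_mem_pow {R : Type*} [CommSemiring R] {I : Ideal R} :
    ∀ {l : List R}, (∀ x ∈ l, x ∈ I) → l.prod ∈ I ^ l.length
  | [], _ => by simp
  | x :: l, h => by
    rw [List.prod_cons, List.length_cons, pow_succ']
    exact Ideal.mul_mem_mul (h x List.mem_cons_self)
      (Ideal.list_prod_mem_pow fun y hy => h y (List.mem_cons_of_mem x hy))

theorem exists_list_prod_map_eq_zero_of_commRing {K V S : Type*} [CommRing K] [AddCommGroup V]
    [Module K V] [Module.Finite K V] [CommRing S] [Algebra K S] (φ : V →ₗ[K] S)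
    (hnil : ∀ x, IsNilpotent (φ x)) :
    ∃ N, ∀ l : List V, N ≤ l.length → (l.map φ).prod = 0 := by
  obtain ⟨s, hs⟩ := Module.Finite.fg_top (R := K) (M := V)
  let I : Ideal S := Ideal.span (φ '' s)
  have hφI : ∀ x, φ x ∈ I := by
    intro x
    have hx : φ x ∈ Submodule.span K (φ '' s) := by
      rw [← Submodule.map_span, hs]
      exact Submodule.mem_map_of_mem trivial
    exact Submodule.span_le_restrictScalars K S _ hx
  have hInil : I ≤ nilradical S := Ideal.span_le.2 fun _ ⟨x, _, hx⟩ => hx ▸ hnil x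
  classical
  obtain ⟨N, hN⟩ := (Ideal.FG.isNilpotent_iff_le_nilradical ⟨s.image φ, by simp [I]⟩).2 hInil
  refine ⟨N, fun l hl => ?_⟩
  have hmem : (l.map φ).prod ∈ I ^ N :=
    Ideal.pow_le_pow_right (by simpa using hl) (Ideal.list_prod_mem_pow (by simp [hφI]))
  rwa [hN, Ideal.zero_eq_bot, Ideal.mem_bot] at hmem

open scoped IsMulCommutative in
theorem exists_list_prod_map_eq_zero {K V R : Type*} [CommRing K] [AddCommGroup V] [Module K V]
    [Module.Finite K V] [Ring R] [Algebra K R] (φ : V →ₗ[K] R)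
    (hcomm : ∀ x y, Commute (φ x) (φ y)) (hnil : ∀ x, IsNilpotent (φ x)) :
    ∃ N, ∀ l : List V, N ≤ l.length → (l.map φ).prod = 0 := by
  have : IsMulCommutative (Algebra.adjoin K (Set.range φ)) :=
    Algebra.isMulCommutative_adjoin K <| by
      rintro _ ⟨x, rfl⟩ _ ⟨y, rfl⟩
      exact hcomm x y
  let ψ : V →ₗ[K] Algebra.adjoin K (Set.range φ) :=
    φ.codRestrict (Algebra.adjoin K (Set.range φ)).toSubmodule fun x =>
      Algebra.subset_adjoin ⟨x, rfl⟩
  obtain ⟨N, hN⟩ := exists_list_prod_map_eq_zero_of_commRing ψ fun x => by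
    obtain ⟨n, hn⟩ := hnil x
    exact ⟨n, Subtype.ext (by rw [SubmonoidClass.coe_pow]; exact hn)⟩
  refine ⟨N, fun l hl => ?_⟩
  have := congrArg (Algebra.adjoin K (Set.range φ)).val (hN l hl)
  rwa [map_list_prod, List.map_map, map_zero] at this

theorem Subalgebra.coe_list_prod_map_adRight {K A : Type*} [CommRing K] [Ring A] [Algebra K A]
    {C : Subalgebra K A} (l : List C) (x : C) :
    ((l.map (adRight K C)).prod x : A) = (l.map fun a : C => adRight K A a).prod x := by
  induction l with
  | nil => rfl
  | cons a l ih => simp [ih]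

theorem exists_list_prod_adRight_eq_zero {K L A : Type*} [Field K] [CommRing L] [Algebra K L]
    [Module.Finite K L] [Ring A] [Algebra K A] [Nontrivial A] (p : ℕ) [ExpChar K p]
    (ι : L →ₐ[K] A) {F : Set L} (hF : ∀ l, ∃ m, l ^ p ^ m ∈ F) {δ : A}
    (hδ : ∀ s ∈ F, Commute δ (ι s)) :
    ∃ N, ∀ l : List L, N ≤ l.length → (l.map fun x => adRight K A (ι x)).prod δ = 0 := by
  set C := Subalgebra.centralizer K (ι '' F)
  have hι : ∀ l, ι l ∈ C := fun l => by
    rw [Subalgebra.mem_centralizer_iff]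
    rintro _ ⟨s, -, rfl⟩
    exact ((Commute.all s l).map ι).eq
  have hδC : δ ∈ C := by
    rw [Subalgebra.mem_centralizer_iff]
    rintro _ ⟨s, hs, rfl⟩
    exact (hδ s hs).eq.symm
  let ιC : L →ₐ[K] C := ι.codRestrict C hι
  let φ : L →ₗ[K] Module.End K C := adRight K C ∘ₗ ιC.toLinearMap
  have hnil : ∀ l, IsNilpotent (φ l) := by
    intro l
    obtain ⟨m, hm⟩ := hF l
    refine ⟨p ^ m, ?_⟩
    rw [LinearMap.comp_apply, adRight_pow_expChar_pow p, AlgHom.toLinearMap_apply, ← map_pow]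
    refine adRight_eq_zero fun x => Subtype.ext ?_
    exact (Subalgebra.mem_centralizer_iff K).1 x.2 _ ⟨_, hm, rfl⟩
  obtain ⟨N, hN⟩ := exists_list_prod_map_eq_zero φ
    (fun x y => commute_adRight_adRight ((Commute.all x y).map ιC)) hnil
  refine ⟨N, fun l hl => ?_⟩
  have key := Subalgebra.coe_list_prod_map_adRight (l.map ιC) ⟨δ, hδC⟩
  rw [List.map_map, List.map_map] at key
  exact key.symm.trans (congrArg Subtype.val (LinearMap.congr_fun (hN l hl) _))

section DiffOps

variable (K L : Type*) [Field K] [Field L] [Algebra K L]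

theorem commute_lmul_of_mem_diffOpFil {s : L} (hs : IsSeparable K s) :
    ∀ {n : ℕ} {δ : Module.End K L}, δ ∈ diffOpFil K L n → Commute δ (Algebra.lmul K L s)
  | 0, _, ⟨a, rfl⟩ => (Commute.all a s).map (Algebra.lmul K L)
  | n + 1, δ, hδ => by
    set c := δ * Algebra.lmul K L s - Algebra.lmul K L s * δ with hc
    have hsc : Commute (Algebra.lmul K L s) c := (commute_lmul_of_mem_diffOpFil hs (hδ s)).symm
    have key := mul_aeval_sub_aeval_mul hc.symm hsc (minpoly K s)
    rw [aeval_algHom_apply, aeval_algHom_apply, minpoly.aeval, map_zero, mul_zero, zero_mul,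
      sub_zero, eq_comm] at key
    have hu : IsUnit (Algebra.lmul K L (aeval s (derivative (minpoly K s)))) :=
      (hs.aeval_derivative_ne_zero (minpoly.aeval K s)).isUnit.map _
    exact sub_eq_zero.1 (hu.mul_right_eq_zero.1 key)

theorem diffOps_subset_centralizer :
    diffOps K L ⊆
      Subalgebra.centralizer K (Algebra.lmul K L '' (separableClosure K L : Set L)) := by
  intro δ hδ
  obtain ⟨n, hn⟩ := Set.mem_iUnion.1 hδ
  rw [SetLike.mem_coe, Subalgebra.mem_centralizer_iff]
  rintro _ ⟨s, hs, rfl⟩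
  exact (commute_lmul_of_mem_diffOpFil K L (mem_separableClosure_iff.1 hs) hn).eq.symm

theorem mem_diffOpFil_of_forall_list_prod_eq_zero (n : ℕ) {δ : Module.End K L}
    (h : ∀ l : List L, l.length = n + 1 →
      (l.map fun x => adRight K (Module.End K L) (Algebra.lmul K L x)).prod δ = 0) :
    δ ∈ diffOpFil K L n := by
  induction n generalizing δ with
  | zero =>
    refine ⟨δ 1, LinearMap.ext fun x => ?_⟩
    have hx := LinearMap.congr_fun (h [x] rfl) 1
    simp only [List.map_cons, List.map_nil, List.prod_cons, List.prod_nil, mul_one,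
      adRight_apply, LinearMap.sub_apply, Module.End.mul_apply,
      LinearMap.zero_apply, sub_eq_zero] at hx
    simpa [mul_comm] using hx.symm
  | succ n ih =>
    refine fun x => ih fun l hl => ?_
    simpa [List.prod_append] using h (l ++ [x]) (by simp [hl])

theorem centralizer_subset_diffOps (p : ℕ) [ExpChar K p] [FiniteDimensional K L] :
    (Subalgebra.centralizer K (Algebra.lmul K L '' (separableClosure K L : Set L)) :
      Set (Module.End K L)) ⊆ diffOps K L := by
  intro δ hδ
  obtain ⟨N, hN⟩ := exists_list_prod_adRight_eq_zero p (Algebra.lmul K L)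
    (fun l => (IsPurelyInseparable.pow_mem (separableClosure K L) p l).imp
      fun _ ⟨s, hs⟩ => hs ▸ s.2)
    fun s hs => ((Subalgebra.mem_centralizer_iff K).1 hδ _ ⟨s, hs, rfl⟩).symm
  exact Set.mem_iUnion.2
    ⟨N, mem_diffOpFil_of_forall_list_prod_eq_zero K L N fun l hl => hN l (by omega)⟩

end DiffOps

/-- For a finite extension `L/K` in characteristic `p > 0`, `D(L/K) = End_{L^{sep}}(L)`,
the centralizer in `End_K(L)` of the multiplication operators by elements of the
separable closure of `K` in `L`. -/
theorem stmt15 (K L : Type*) [Field K] [Field L] [Algebra K L] [FiniteDimensional K L]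
    (p : ℕ) (hp : p.Prime) [CharP K p] :
    diffOps K L =
      (Subalgebra.centralizer K (Algebra.lmul K L '' (separableClosure K L : Set L)) :
        Set (Module.End K L)) := by
  have : ExpChar K p := ExpChar.prime hp
  exact (diffOps_subset_centralizer K L).antisymm (centralizer_subset_diffOps K L p)
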